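/- arXiv:2410.16932 — 4 statements merged into one kernel-verified Lean document; each statement's English description precedes it below -/
import Mathlib

section
/- Let G₁ be the subgroup of G generated by {e₁,…,e_k}. For every w ∈ G₁ there exist an element γ of the subgroup ⟨S₁⟩ generated by S₁ and nonnegative integers i₁,…,i_k such that γ·w = e_k^{i_k}·e_{k−1}^{i_{k−1}}⋯e₁^{i₁}. -/
/-!
Each `eᵢ` has finite order, so `G₁` is the monoid generated by the `eᵢ` and it suffices to
sort a sorted word multiplied on the right by one generator `e_j`. Split the sorted word as
`A e_j^a B`, with `A` the factors above `e_j` and `B` those below, and put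
`g_c = A [e_j^c, B] A⁻¹`. Then `g_{a+1} g_a⁻¹ · A e_j^a B e_j = A e_j^{a+1} B`. Keeping all
exponents in `[1, mᵢ]`, each `g_c` lies in `S₁` unless `c = m_j` or all exponents in `B` are
maximal, and in those cases `g_c = 1`.
-/

open scoped commutatorElement

/-- The relators `eᵢ^{mᵢ}` defining `G = F_{2n} ∗ ℤ_{m₁} ∗ ⋯ ∗ ℤ_{m_k}`. -/
def Grels (n k : ℕ) (m : ℕ → ℕ) : Set (FreeGroup (Fin k ⊕ Fin (2 * n))) :=
  Set.range (fun i : Fin k => FreeGroup.of (Sum.inl i) ^ m i.val)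

/-- The group `G = ⟨e₁,…,e_k, h₁,…,h_{2n} ∣ e₁^{m₁} = ⋯ = e_k^{m_k} = 1⟩`,
i.e. the free product `F_{2n} ∗ ℤ_{m₁} ∗ ⋯ ∗ ℤ_{m_k}`. -/
abbrev GG (n k : ℕ) (m : ℕ → ℕ) : Type := PresentedGroup (Grels n k m)

/-- The generator `e_{i+1}` of `G` (0-indexed: `ee n k m i` is `e_{i+1}`). -/
def ee (n k : ℕ) (m : ℕ → ℕ) (i : Fin k) : GG n k m := PresentedGroup.of (Sum.inl i)

/-- The generator `h_{j+1}` of `G` (0-indexed). -/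
def hh (n k : ℕ) (m : ℕ → ℕ) (j : Fin (2 * n)) : GG n k m := PresentedGroup.of (Sum.inr j)

/-- The element `α = e₁e₂⋯e_k · [h₁,h₂][h₃,h₄]⋯[h_{2n-1},h_{2n}]` of `G`. -/
def alphaG (n k : ℕ) (m : ℕ → ℕ) : GG n k m :=
  (List.ofFn fun i : Fin k => ee n k m i).prod *
  (List.ofFn fun j : Fin n =>
    ⁅hh n k m ⟨2 * j.val, by have := j.isLt; omega⟩,
      hh n k m ⟨2 * j.val + 1, by have := j.isLt; omega⟩⁆).prod

/-- The descending product `eChunk u s t = e_t^{u_t} ⋯ e_{s+1}^{u_{s+1}}` (0-indexed: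
`e_{t-1}^{u(t-1)} * e_{t-2}^{u(t-2)} * ⋯ * e_s^{u s}`, empty product if `t ≤ s`). -/
def eChunk (n k : ℕ) (m : ℕ → ℕ) (u : ℕ → ℕ) (s : ℕ) : ℕ → GG n k m
  | 0 => 1
  | t + 1 =>
      if s ≤ t then (if h : t < k then ee n k m ⟨t, h⟩ ^ u t else 1) * eChunk n k m u s t
      else 1

/-- The set `S₁ = { g_ξ f_λ g_ξ⁻¹ ∣ 2 ≤ t ≤ k, λ ∈ Λ_t, ξ ∈ Ξ_t }`, where, for
`λ = (u₁,…,u_t) ∈ Λ_t = (([m₁]×⋯×[m_{t-1}]) ∖ {(m₁,…,m_{t-1})}) × [m_t - 1]` and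
`ξ = (u_{t+1},…,u_k) ∈ Ξ_t = [m_{t+1}]×⋯×[m_k]`, one sets
`f_λ = [e_t^{u_t}, e_{t-1}^{u_{t-1}}⋯e₁^{u₁}]` and `g_ξ = e_k^{u_k}⋯e_{t+1}^{u_{t+1}}`.
(Everything is 0-indexed here: `u i` is `u_{i+1}`, and `eChunk u (t-1) t = e_t^{u_t}`.) -/
def S1set (n k : ℕ) (m : ℕ → ℕ) : Set (GG n k m) :=
  { x | ∃ (t : ℕ) (u : ℕ → ℕ), 2 ≤ t ∧ t ≤ k ∧
      (∀ i < t - 1, 1 ≤ u i ∧ u i ≤ m i) ∧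
      (∃ i < t - 1, u i ≠ m i) ∧
      (1 ≤ u (t - 1) ∧ u (t - 1) ≤ m (t - 1) - 1) ∧
      (∀ i, t ≤ i → i < k → 1 ≤ u i ∧ u i ≤ m i) ∧
      x = eChunk n k m u t k *
            ⁅eChunk n k m u (t - 1) t, eChunk n k m u 0 (t - 1)⁆ *
            (eChunk n k m u t k)⁻¹ }

/-- The set `S₂ = { (e_k^{i_k}⋯e₁^{i₁}) h_l (e_k^{i_k}⋯e₁^{i₁})⁻¹ ∣ l ∈ [2n],
(i₁,…,i_k) ∈ [m₁]×⋯×[m_k] }` (0-indexed). -/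
def S2set (n k : ℕ) (m : ℕ → ℕ) : Set (GG n k m) :=
  { x | ∃ (l : Fin (2 * n)) (u : ℕ → ℕ),
      (∀ i < k, 1 ≤ u i ∧ u i ≤ m i) ∧
      x = eChunk n k m u 0 k * hh n k m l * (eChunk n k m u 0 k)⁻¹ }

theorem conj_commutatorElement_div_mul_eq {G : Type*} [Group G] (A B x y : G) :
    (A * ⁅y * x, B⁆ * A⁻¹) / (A * ⁅y, B⁆ * A⁻¹) * (A * y * B * x) = A * (y * x) * B := by
  simp only [commutatorElement_def, div_eq_mul_inv]
  group

namespace SortInG1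

variable {n k : ℕ} {m : ℕ → ℕ}

theorem ee_pow_eq_one (i : Fin k) : ee n k m i ^ m i = 1 :=
  (map_pow (PresentedGroup.mk _) _ _).symm.trans (PresentedGroup.one_of_mem ⟨i, rfl⟩)

theorem isOfFinOrder_ee (hm : ∀ i < k, 2 ≤ m i) (i : Fin k) : IsOfFinOrder (ee n k m i) :=
  isOfFinOrder_iff_pow_eq_one.2 ⟨m i, by linarith [hm i i.isLt], ee_pow_eq_one i⟩

theorem eChunk_self (u : ℕ → ℕ) (s : ℕ) : eChunk n k m u s s = 1 := by
  cases s with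
  | zero => rfl
  | succ t => simp [eChunk]

theorem eChunk_succ_of_le (u : ℕ → ℕ) {s t : ℕ} (hst : s ≤ t) :
    eChunk n k m u s (t + 1) =
      (if h : t < k then ee n k m ⟨t, h⟩ ^ u t else 1) * eChunk n k m u s t := by
  simp only [eChunk, if_pos hst]

theorem eChunk_congr {u v : ℕ → ℕ} {s t : ℕ} (h : ∀ i, s ≤ i → i < t → u i = v i) :
    eChunk n k m u s t = eChunk n k m v s t := by
  induction t with
  | zero => rfl
  | succ t ih =>
    by_cases hst : s ≤ t
    · rw [eChunk_succ_of_le u hst, eChunk_succ_of_le v hst, h t hst t.lt_succ_self,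
        ih fun i h₁ h₂ => h i h₁ (by omega)]
    · simp [eChunk, hst]

theorem eChunk_eq_one {u : ℕ → ℕ} {s t : ℕ}
    (h : ∀ i (hi : i < k), s ≤ i → i < t → ee n k m ⟨i, hi⟩ ^ u i = 1) :
    eChunk n k m u s t = 1 := by
  induction t with
  | zero => rfl
  | succ t ih =>
    by_cases hst : s ≤ t
    · rw [eChunk_succ_of_le u hst, ih fun i hi h₁ h₂ => h i hi h₁ (by omega)]
      split_ifs with ht
      · simpa using h t ht hst t.lt_succ_self
      · simp
    · simp [eChunk, hst]

theorem eChunk_mul_eChunk (u : ℕ → ℕ) {r s t : ℕ} (hrs : r ≤ s) (hst : s ≤ t) :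
    eChunk n k m u s t * eChunk n k m u r s = eChunk n k m u r t := by
  induction t with
  | zero =>
    obtain rfl : s = 0 := by omega
    simp [eChunk_self]
  | succ t ih =>
    rcases Nat.lt_or_ge t s with hts | hst'
    · obtain rfl : s = t + 1 := by omega
      rw [eChunk_self, one_mul]
    · rw [eChunk_succ_of_le u hst', eChunk_succ_of_le u (hrs.trans hst'), mul_assoc, ih hst']

theorem eChunk_succ_self (u : ℕ → ℕ) {j : ℕ} (hj : j < k) :
    eChunk n k m u j (j + 1) = ee n k m ⟨j, hj⟩ ^ u j := by
  rw [eChunk_succ_of_le u le_rfl, eChunk_self, mul_one, dif_pos hj]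

theorem eChunk_eq_mul_pow_mul (u : ℕ → ℕ) {j : ℕ} (hj : j < k) :
    eChunk n k m u 0 k =
      eChunk n k m u (j + 1) k * ee n k m ⟨j, hj⟩ ^ u j * eChunk n k m u 0 j := by
  rw [← eChunk_mul_eChunk u (Nat.zero_le (j + 1)) hj, ← eChunk_mul_eChunk u (Nat.zero_le j)
    j.le_succ, eChunk_succ_self u hj, mul_assoc]

/-- The element `g_c` of the sketch above, for `c = u j` and the sorted word `eChunk u 0 k`. -/
def sortingConj (u : ℕ → ℕ) {j : ℕ} (hj : j < k) : GG n k m :=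
  eChunk n k m u (j + 1) k * ⁅ee n k m ⟨j, hj⟩ ^ u j, eChunk n k m u 0 j⁆ *
    (eChunk n k m u (j + 1) k)⁻¹

theorem sortingConj_mem_closure_S1set {u : ℕ → ℕ} (hu : ∀ i < k, 1 ≤ u i ∧ u i ≤ m i)
    {j : ℕ} (hj : j < k) : sortingConj u hj ∈ Subgroup.closure (S1set n k m) := by
  by_cases hB : ∀ i < j, u i = m i
  · have hB1 : eChunk n k m u 0 j = 1 :=
      eChunk_eq_one fun i hi _ hij => by rw [hB i hij]; exact ee_pow_eq_one _
    rw [sortingConj, hB1, commutatorElement_one_right, mul_one, mul_inv_cancel]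
    exact one_mem _
  by_cases hx : u j = m j
  · rw [sortingConj, hx, ee_pow_eq_one ⟨j, hj⟩, commutatorElement_one_left, mul_one,
      mul_inv_cancel]
    exact one_mem _
  push Not at hB
  apply Subgroup.subset_closure
  refine ⟨j + 1, u, by omega, hj, fun i hi => hu i (by omega), ?_, ?_,
    fun i hi hik => hu i hik, ?_⟩
  · simpa using hB
  · have := hu j hj
    simp only [Nat.add_sub_cancel]
    omega
  · simp only [Nat.add_sub_cancel, sortingConj, eChunk_succ_self u hj]

theorem exists_mul_eChunk_mul_ee_eq_eChunk (hm : ∀ i < k, 2 ≤ m i) {u : ℕ → ℕ}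
    (hu : ∀ i < k, 1 ≤ u i ∧ u i ≤ m i) (j : Fin k) :
    ∃ γ ∈ Subgroup.closure (S1set n k m), ∃ u' : ℕ → ℕ, (∀ i < k, 1 ≤ u' i ∧ u' i ≤ m i) ∧
      γ * (eChunk n k m u 0 k * ee n k m j) = eChunk n k m u' 0 k := by
  obtain ⟨j, hj⟩ := j
  set u' := Function.update u j (u j % m j + 1)
  have hu' : ∀ i < k, 1 ≤ u' i ∧ u' i ≤ m i := by
    intro i hi
    rcases eq_or_ne i j with rfl | hij
    · have := Nat.mod_lt (u i) (by linarith [hm i hi] : 0 < m i)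
      simp only [u', Function.update_self]
      omega
    · simpa [u', Function.update_of_ne hij] using hu i hi
  have hA : eChunk n k m u' (j + 1) k = eChunk n k m u (j + 1) k :=
    eChunk_congr fun i hi _ => Function.update_of_ne (by omega) _ _
  have hB : eChunk n k m u' 0 j = eChunk n k m u 0 j :=
    eChunk_congr fun i _ hi => Function.update_of_ne (by omega) _ _
  have hx : ee n k m ⟨j, hj⟩ ^ u' j = ee n k m ⟨j, hj⟩ ^ u j * ee n k m ⟨j, hj⟩ := by
    rw [show u' j = u j % m j + 1 from Function.update_self .., ← pow_succ,
      pow_eq_pow_mod _ (ee_pow_eq_one _), Nat.mod_add_mod, ← pow_eq_pow_mod _ (ee_pow_eq_one _)]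
  refine ⟨sortingConj u' hj / sortingConj u hj, div_mem (sortingConj_mem_closure_S1set hu' hj)
    (sortingConj_mem_closure_S1set hu hj), u', hu', ?_⟩
  rw [eChunk_eq_mul_pow_mul u hj, eChunk_eq_mul_pow_mul u' hj, sortingConj, sortingConj, hA, hB,
    hx]
  exact conj_commutatorElement_div_mul_eq _ _ _ _

end SortInG1

theorem sort_in_G1_general (n k : ℕ) (m : ℕ → ℕ) (hm : ∀ i < k, 2 ≤ m i) :
    ∀ w ∈ Subgroup.closure (Set.range (ee n k m)),
      ∃ γ ∈ Subgroup.closure (S1set n k m), ∃ u : ℕ → ℕ,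
        γ * w = eChunk n k m u 0 k := by
  intro w hw
  rw [← Subgroup.mem_toSubmonoid, Subgroup.closure_toSubmonoid_of_isOfFinOrder
    (by rintro _ ⟨i, rfl⟩; exact SortInG1.isOfFinOrder_ee hm i)] at hw
  suffices ∃ γ ∈ Subgroup.closure (S1set n k m), ∃ u : ℕ → ℕ,
      (∀ i < k, 1 ≤ u i ∧ u i ≤ m i) ∧ γ * w = eChunk n k m u 0 k by
    obtain ⟨γ, hγ, u, -, hγw⟩ := this
    exact ⟨γ, hγ, u, hγw⟩
  induction hw using Submonoid.closure_induction_right with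
  | one =>
    refine ⟨1, one_mem _, m, fun i hi => ⟨by linarith [hm i hi], le_rfl⟩, ?_⟩
    rw [mul_one, SortInG1.eChunk_eq_one fun i hi _ _ => SortInG1.ee_pow_eq_one ⟨i, hi⟩]
  | mul_right x _ _ hy ih =>
    obtain ⟨j, rfl⟩ := hy
    obtain ⟨γ, hγ, u, hu, hγx⟩ := ih
    obtain ⟨γ', hγ', u', hu', hγ'u⟩ :=
      SortInG1.exists_mul_eChunk_mul_ee_eq_eChunk hm hu j
    exact ⟨γ' * γ, mul_mem hγ' hγ, u', hu', by rw [← hγ'u, ← hγx]; group⟩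

/-- **Lemma 3.6.** For every `w` in the subgroup `G₁ = ⟨e₁,…,e_k⟩` of `G`, there are
`γ ∈ ⟨S₁⟩` and nonnegative integers `i₁,…,i_k` with `γ·w = e_k^{i_k}⋯e₁^{i₁}`. -/
theorem sort_in_G1 (n k : ℕ) (m : ℕ → ℕ) (hk : 1 ≤ k) (hm : ∀ i < k, 2 ≤ m i) :
    ∀ w ∈ Subgroup.closure (Set.range (ee n k m)),
      ∃ γ ∈ Subgroup.closure (S1set n k m), ∃ u : ℕ → ℕ,
        γ * w = eChunk n k m u 0 k :=
  sort_in_G1_general n k m hm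
end

section
/- For every g ∈ G there exist an element f of the subgroup F = ⟨S₁ ∪ S₂⟩ and nonnegative integers i₁,…,i_k such that f·g = e_k^{i_k}·e_{k−1}^{i_{k−1}}⋯e₁^{i₁}. -/
open scoped commutatorElement

/-!
Let `T` be the set of sorted words `e_k^{i_k}⋯e₁^{i₁}`. The elements `x` with `T·x ⊆ F·T` form a
submonoid, so it suffices that it contains each generator and its inverse; moreover
`e_t⁻¹ = e_t^{m_t - 1}`. Write a sorted word, with exponents normalised into `[1, mᵢ]`, as
`w = A e_t^a B` with `A`, `B` the factors above and below `e_t`. Then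
`A e_t^{a+1} B = A[e_t^{a+1}, B]A⁻¹ · (A[e_t^a, B]A⁻¹)⁻¹ · w e_t`, and every `A[e_t^c, B]A⁻¹` is
trivial or lies in `S₁`. Right multiplication by `h_l^{±1}` is absorbed by the `S₂`-element
`w h_l w⁻¹`.
-/

section SortingMonoid

variable {G : Type*} [Group G]

def sortingMonoid (H : Subgroup G) (T : Set G) : Submonoid G where
  carrier := {x | ∀ w ∈ T, ∃ f ∈ H, f * (w * x) ∈ T}
  one_mem' w hw := ⟨1, H.one_mem, by simpa using hw⟩
  mul_mem' {x y} hx hy w hw := by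
    obtain ⟨f, hf, hfx⟩ := hx w hw
    obtain ⟨f', hf', hf'y⟩ := hy _ hfx
    exact ⟨f' * f, H.mul_mem hf' hf, by simpa only [mul_assoc] using hf'y⟩

theorem exists_mem_mul_mem_of_closure_eq_top {H : Subgroup G} {S T : Set G}
    (hS : Subgroup.closure S = ⊤) (hT : 1 ∈ T)
    (hST : ∀ s ∈ S, s ∈ sortingMonoid H T ∧ s⁻¹ ∈ sortingMonoid H T) (g : G) :
    ∃ f ∈ H, f * g ∈ T := by
  have hg : g ∈ Submonoid.closure (S ∪ S⁻¹) := by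
    rw [← Subgroup.closure_toSubmonoid, hS]
    exact Subgroup.mem_top g
  have hle : Submonoid.closure (S ∪ S⁻¹) ≤ sortingMonoid H T :=
    Submonoid.closure_le.2 fun s hs => hs.elim (fun hs => (hST s hs).1)
      fun hs => by simpa using (hST _ hs).2
  simpa using hle hg 1 hT

theorem mul_pow_succ_mul (A E B : G) (a : ℕ) :
    A * E ^ (a + 1) * B =
      A * ⁅E ^ (a + 1), B⁆ * A⁻¹ * (A * ⁅E ^ a, B⁆ * A⁻¹)⁻¹ * (A * E ^ a * B * E) := by
  simp only [commutatorElement_def, pow_succ]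
  group

end SortingMonoid

section Chunks

variable {n k : ℕ} {m : ℕ → ℕ}

theorem ee_pow_self (i : Fin k) : ee n k m i ^ m i = 1 := by
  show ((QuotientGroup.mk (FreeGroup.of (Sum.inl i)) : GG n k m)) ^ m i = 1
  rw [← QuotientGroup.mk_pow, QuotientGroup.eq_one_iff]
  exact Subgroup.subset_normalClosure ⟨i, rfl⟩

theorem ee_pow_eq_pow_of_modEq (i : Fin k) {a b : ℕ} (hab : a ≡ b [MOD m i]) :
    ee n k m i ^ a = ee n k m i ^ b :=
  pow_eq_pow_iff_modEq.2 (hab.of_dvd (orderOf_dvd_of_pow_eq_one (ee_pow_self i)))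

theorem ee_inv (i : Fin k) (hi : 0 < m i) : (ee n k m i)⁻¹ = ee n k m i ^ (m i - 1) :=
  (eq_inv_of_mul_eq_one_left (by rw [pow_sub_one_mul hi.ne', ee_pow_self])).symm

theorem eChunk_succ (u : ℕ → ℕ) (s t : ℕ) : eChunk n k m u s (t + 1) =
    if s ≤ t then (if h : t < k then ee n k m ⟨t, h⟩ ^ u t else 1) * eChunk n k m u s t
    else 1 := rfl

theorem eChunk_of_le (u : ℕ → ℕ) {s t : ℕ} (h : t ≤ s) : eChunk n k m u s t = 1 := by
  cases t with
  | zero => rfl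
  | succ t => rw [eChunk_succ, if_neg (by omega)]

theorem eChunk_single (u : ℕ → ℕ) (t : Fin k) :
    eChunk n k m u t (t + 1) = ee n k m t ^ u t := by
  rw [eChunk_succ, if_pos le_rfl, dif_pos t.isLt, eChunk_of_le u le_rfl, mul_one]

theorem eChunk_congr_pow {u v : ℕ → ℕ} {s t : ℕ}
    (h : ∀ i (hi : i < k), s ≤ i → i < t → ee n k m ⟨i, hi⟩ ^ u i = ee n k m ⟨i, hi⟩ ^ v i) :
    eChunk n k m u s t = eChunk n k m v s t := by
  induction t with
  | zero => rfl
  | succ t ih =>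
    rw [eChunk_succ, eChunk_succ, ih fun i hi h1 h2 => h i hi h1 (by omega)]
    split_ifs with hst htk <;> first | rfl | rw [h t htk hst (by omega)]

theorem eChunk_congr {u v : ℕ → ℕ} {s t : ℕ} (h : ∀ i, s ≤ i → i < t → u i = v i) :
    eChunk n k m u s t = eChunk n k m v s t :=
  eChunk_congr_pow fun i _ h1 h2 => by rw [h i h1 h2]

theorem eChunk_update_of_not_mem (u : ℕ → ℕ) {s t j : ℕ} (hj : j < s ∨ t ≤ j) (x : ℕ) :
    eChunk n k m (Function.update u j x) s t = eChunk n k m u s t :=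
  eChunk_congr fun i h1 h2 => Function.update_of_ne (by omega) x u

theorem eChunk_eq_one {u : ℕ → ℕ} {s t : ℕ}
    (h : ∀ i (hi : i < k), s ≤ i → i < t → ee n k m ⟨i, hi⟩ ^ u i = 1) :
    eChunk n k m u s t = 1 := by
  rw [eChunk_congr_pow (v := fun _ => 0) fun i hi h1 h2 => by rw [h i hi h1 h2, pow_zero]]
  clear h
  induction t with
  | zero => rfl
  | succ t ih =>
    rw [eChunk_succ]
    split_ifs <;> simp [ih]

theorem eChunk_mul_eChunk (u : ℕ → ℕ) {s r t : ℕ} (hsr : s ≤ r) (hrt : r ≤ t) :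
    eChunk n k m u r t * eChunk n k m u s r = eChunk n k m u s t := by
  induction t with
  | zero => obtain rfl : r = 0 := by omega
            rw [eChunk_of_le u le_rfl, one_mul]
  | succ t ih =>
    rcases hrt.lt_or_eq with hrt | rfl
    · rw [eChunk_succ, eChunk_succ, if_pos (by omega), if_pos (by omega), mul_assoc,
        ih (by omega)]
    · rw [eChunk_of_le u le_rfl, one_mul]

theorem eChunk_eq_mul_pow_mul (u : ℕ → ℕ) (t : Fin k) :
    eChunk n k m u 0 k = eChunk n k m u (t + 1) k * ee n k m t ^ u t * eChunk n k m u 0 t := by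
  rw [← eChunk_single, ← eChunk_mul_eChunk u (Nat.zero_le _) t.isLt,
    ← eChunk_mul_eChunk u (Nat.zero_le _) (Nat.le_succ t), mul_assoc]

theorem exists_eChunk_eq_of_pos (hm : ∀ i < k, 0 < m i) (u : ℕ → ℕ) :
    ∃ v : ℕ → ℕ, (∀ i < k, 1 ≤ v i ∧ v i ≤ m i) ∧ eChunk n k m u 0 k = eChunk n k m v 0 k := by
  -- `(u + m - 1) % m + 1` is the representative of `u` modulo `m` in `[1, m]`.
  refine ⟨fun i => (u i + m i - 1) % m i + 1, fun i hi => ?_, eChunk_congr_pow fun i hi _ _ => ?_⟩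
  · have := Nat.mod_lt (u i + m i - 1) (hm i hi)
    dsimp only
    omega
  · apply ee_pow_eq_pow_of_modEq
    have hmi := hm i hi
    calc u i ≡ u i + m i [MOD m i] := (Nat.add_modEq_right).symm
      _ = u i + m i - 1 + 1 := by omega
      _ ≡ (u i + m i - 1) % m i + 1 [MOD m i] := ((Nat.mod_modEq _ _).symm.add_right 1)

end Chunks

section SortingInG

variable {n k : ℕ} {m : ℕ → ℕ}

abbrev FF (n k : ℕ) (m : ℕ → ℕ) : Subgroup (GG n k m) :=
  Subgroup.closure (S1set n k m ∪ S2set n k m)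

def sortedWords (n k : ℕ) (m : ℕ → ℕ) : Set (GG n k m) :=
  Set.range fun u => eChunk n k m u 0 k

theorem conj_commutator_mem_S1set (t : Fin k) {u : ℕ → ℕ}
    (hu : ∀ i < k, i ≠ t → 1 ≤ u i ∧ u i ≤ m i) (ht : 1 ≤ u t ∧ u t ≤ m t - 1)
    (hne : ∃ i < (t : ℕ), u i ≠ m i) :
    eChunk n k m u (t + 1) k * ⁅ee n k m t ^ u t, eChunk n k m u 0 t⁆ *
      (eChunk n k m u (t + 1) k)⁻¹ ∈ S1set n k m :=
  ⟨t + 1, u, by omega, t.isLt, fun i hi => hu i (by omega) (by omega), by simpa using hne,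
    by simpa using ht, fun i h1 h2 => hu i h2 (by omega),
    by simp only [Nat.add_sub_cancel, eChunk_single]⟩

theorem conj_commutator_mem_closure (t : Fin k) {v : ℕ → ℕ}
    (hv : ∀ i < k, 1 ≤ v i ∧ v i ≤ m i) (a : ℕ) :
    eChunk n k m v (t + 1) k * ⁅ee n k m t ^ a, eChunk n k m v 0 t⁆ *
      (eChunk n k m v (t + 1) k)⁻¹ ∈ FF n k m := by
  have hmt : 0 < m t := by have := hv t t.isLt; omega
  by_cases ha : a % m t = 0
  · rw [ee_pow_eq_pow_of_modEq t (b := 0) (Nat.modEq_zero_iff_dvd.2 (Nat.dvd_of_mod_eq_zero ha)),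
      pow_zero, commutatorElement_one_left, mul_one, mul_inv_cancel]
    exact one_mem _
  by_cases hB : ∀ i < (t : ℕ), v i = m i
  · rw [eChunk_eq_one (s := 0) (t := t) fun i hi _ h2 => by rw [hB i h2]; exact ee_pow_self _,
      commutatorElement_one_right, mul_one, mul_inv_cancel]
    exact one_mem _
  push Not at hB
  obtain ⟨i, hit, hi⟩ := hB
  have hmem := conj_commutator_mem_S1set (n := n) t (u := Function.update v t (a % m t))
    (fun i hi hit => by rw [Function.update_of_ne hit]; exact hv i hi)
    (by rw [Function.update_self]; have := Nat.mod_lt a hmt; omega)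
    ⟨i, hit, by rwa [Function.update_of_ne (by omega)]⟩
  rw [Function.update_self, eChunk_update_of_not_mem v (Or.inl (by omega)),
    eChunk_update_of_not_mem v (Or.inr le_rfl), ee_pow_eq_pow_of_modEq t (Nat.mod_modEq a _)]
    at hmem
  exact Subgroup.subset_closure (Or.inl hmem)

theorem ee_mem_sortingMonoid (hm : ∀ i < k, 0 < m i) (t : Fin k) :
    ee n k m t ∈ sortingMonoid (FF n k m)
      (sortedWords n k m) := by
  rintro _ ⟨u, rfl⟩
  obtain ⟨v, hv, huv⟩ := exists_eChunk_eq_of_pos (n := n) hm u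
  refine ⟨_, mul_mem (conj_commutator_mem_closure t hv (v t + 1))
    (inv_mem (conj_commutator_mem_closure t hv (v t))), Function.update v t (v t + 1), ?_⟩
  dsimp only
  rw [eChunk_eq_mul_pow_mul, Function.update_self, eChunk_update_of_not_mem v (Or.inl (by omega)),
    eChunk_update_of_not_mem v (Or.inr le_rfl), huv, eChunk_eq_mul_pow_mul v t]
  exact mul_pow_succ_mul _ _ _ _

theorem zpow_hh_mem_sortingMonoid (hm : ∀ i < k, 0 < m i) (j : Fin (2 * n)) (z : ℤ) :
    hh n k m j ^ z ∈
      sortingMonoid (FF n k m) (sortedWords n k m) := by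
  rintro _ ⟨u, rfl⟩
  obtain ⟨v, hv, huv⟩ := exists_eChunk_eq_of_pos (n := n) hm u
  have hconj : eChunk n k m v 0 k * hh n k m j * (eChunk n k m v 0 k)⁻¹ ∈
      FF n k m :=
    Subgroup.subset_closure (Or.inr ⟨j, v, hv, rfl⟩)
  refine ⟨_, zpow_mem hconj (-z), v, ?_⟩
  dsimp only
  rw [conj_zpow, huv]
  group

theorem of_mem_sortingMonoid (hm : ∀ i < k, 0 < m i) (s : Fin k ⊕ Fin (2 * n)) :
    PresentedGroup.of s ∈ sortingMonoid (FF n k m) (sortedWords n k m) ∧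
      (PresentedGroup.of s)⁻¹ ∈ sortingMonoid (FF n k m) (sortedWords n k m) := by
  rcases s with t | j
  · refine ⟨ee_mem_sortingMonoid hm t, ?_⟩
    rw [show PresentedGroup.of (Sum.inl t) = ee n k m t from rfl, ee_inv t (hm t t.isLt)]
    exact pow_mem (ee_mem_sortingMonoid hm t) _
  · rw [← zpow_one (PresentedGroup.of _), ← zpow_neg]
    exact ⟨zpow_hh_mem_sortingMonoid hm j 1, zpow_hh_mem_sortingMonoid hm j (-1)⟩

end SortingInG

theorem sort_in_G_general (n k : ℕ) (m : ℕ → ℕ) (hm : ∀ i < k, 2 ≤ m i) :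
    ∀ g : GG n k m,
      ∃ f ∈ Subgroup.closure (S1set n k m ∪ S2set n k m), ∃ u : ℕ → ℕ,
        f * g = eChunk n k m u 0 k := by
  have hpos : ∀ i < k, 0 < m i := fun i hi => zero_lt_two.trans_le (hm i hi)
  intro g
  obtain ⟨f, hf, u, hu⟩ := exists_mem_mul_mem_of_closure_eq_top (T := sortedWords n k m)
    (PresentedGroup.closure_range_of _) ⟨fun _ => 0, eChunk_eq_one fun _ _ _ _ => pow_zero _⟩
    (fun _ ⟨s, hs⟩ => hs ▸ of_mem_sortingMonoid hpos s) g
  exact ⟨f, hf, u, hu.symm⟩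

/-- **Lemma 3.7.** For every `g ∈ G` there are `f ∈ F = ⟨S₁ ∪ S₂⟩` and nonnegative
integers `i₁,…,i_k` with `f·g = e_k^{i_k}⋯e₁^{i₁}`. -/
theorem sort_in_G (n k : ℕ) (m : ℕ → ℕ) (hk : 1 ≤ k) (hm : ∀ i < k, 2 ≤ m i) :
    ∀ g : GG n k m,
      ∃ f ∈ Subgroup.closure (S1set n k m ∪ S2set n k m), ∃ u : ℕ → ℕ,
        f * g = eChunk n k m u 0 k :=
  sort_in_G_general n k m hm
end

section
/- Assume (n,k,m₁,…,m_k) is neither of the form (0,1,m₁) nor equal to (0,2,2,2). Then the subgroup F = ⟨S₁ ∪ S₂⟩ of G is a free group (freely generated by the elements of S₁ ∪ S₂) and its index in G satisfies [G : F] = m₁·m₂⋯m_k. -/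
open scoped commutatorElement

/-!
Let `φ : G → A = ∏ ℤ/mᵢ` send `eᵢ` to the `i`-th unit vector and kill the `hₗ`, and let
`σ(a) = e_k^{a_k} ⋯ e₁^{a₁}` (exponents in `[0, mᵢ)`) be the resulting transversal of `ker φ`.
Each `σ(a) hₗ σ(a)⁻¹` lies in `S₂`, and each `σ(a) eⱼ σ(a + δⱼ)⁻¹` is a quotient of two elements of
`S₁ ∪ {1}`; hence `⟨S₁ ∪ S₂⟩ = ker φ`, of index `|A| = m₁ ⋯ m_k`.

For freeness, rewrite along the transversal: sending `eⱼ` and `hₗ` to these words in the free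
group `F(S₁ ∪ S₂)`, placed in the regular wreath product `F(S₁ ∪ S₂) ≀ A`, respects the relations
`eⱼ^{mⱼ} = 1` because the words for `eⱼ` telescope along each `eⱼ`-orbit of cosets. On `ker φ`,
the coordinate at the trivial coset is a homomorphism to `F(S₁ ∪ S₂)` that maps every element of
`S₁ ∪ S₂` to the corresponding free generator, i.e. a retraction of `F(S₁ ∪ S₂) → ⟨S₁ ∪ S₂⟩`.
-/

theorem Subgroup.existsUnique_lift_of_retraction {G : Type*} [Group G] {S : Set G}
    (θ : Subgroup.closure S →* FreeGroup S)
    (hθ : ∀ s : S, θ ⟨s, Subgroup.subset_closure s.2⟩ = FreeGroup.of s)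
    (H : Type*) [Group H] (f : S → H) :
    ∃! φ : Subgroup.closure S →* H,
      ∀ s : S, φ ⟨s, Subgroup.subset_closure s.2⟩ = f s := by
  refine ⟨(FreeGroup.lift f).comp θ, fun s => by simp [hθ], fun ψ hψ => ?_⟩
  refine MonoidHom.eq_of_eqOn_dense Subgroup.closure_closure_coe_preimage ?_
  rintro ⟨x, hx⟩ hxS
  exact (hψ ⟨x, hxS⟩).trans (by simp [hθ ⟨x, hxS⟩])

theorem MonoidHom.ker_le_of_transversal {G Q : Type*} [Group G] [Group Q] (φ : G →* Q)
    {σ : Q → G} (hσ : σ 1 = 1) {X : Set G} (hX : Subgroup.closure X = ⊤) {K : Subgroup G}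
    (hK : ∀ q, ∀ x ∈ X, σ q * x * (σ (q * φ x))⁻¹ ∈ K) : φ.ker ≤ K := by
  suffices h : ∀ g q, σ q * g * (σ (q * φ g))⁻¹ ∈ K by
    intro g hg
    simpa [MonoidHom.mem_ker.mp hg, hσ] using h g 1
  intro g
  have hg : g ∈ Subgroup.closure X := hX ▸ Subgroup.mem_top g
  induction hg using Subgroup.closure_induction with
  | mem x hx => exact fun q => hK q x hx
  | one => simp [K.one_mem]
  | mul g h _ _ hg hh => exact fun q => by simpa [mul_assoc] using K.mul_mem (hg q) (hh (q * φ g))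
  | inv g _ hg => exact fun q => by simpa [mul_assoc] using K.inv_mem (hg (q * φ g⁻¹))

namespace RegularWreathProduct

section

variable {D Q : Type*} [Group D] [Group Q]

def kerLeftHom : (rightHom : D ≀ᵣ Q →* Q).ker →* D where
  toFun x := x.1.left 1
  map_one' := rfl
  map_mul' x y := by
    have hx : x.1.right = 1 := x.2
    simp [mul_left, hx]

end

variable {D A : Type*} [AddCommGroup A]

/-- Mathlib's `D ≀ᵣ Q` lets `q` act on `Q → D` by `f ↦ f (q⁻¹ * ·)`; reading the coordinates at
`-a` turns this into the translation `a ↦ a + q` of cosets. -/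
def leftAt (x : D ≀ᵣ Multiplicative A) (a : A) : D := x.left (Multiplicative.ofAdd (-a))

def ofFun (f : A → D) (δ : A) : D ≀ᵣ Multiplicative A :=
  ⟨fun q => f (-Multiplicative.toAdd q), Multiplicative.ofAdd δ⟩

@[simp] lemma leftAt_ofFun (f : A → D) (δ : A) (a : A) : leftAt (ofFun f δ) a = f a := by
  simp [leftAt, ofFun]

@[simp] lemma right_ofFun (f : A → D) (δ : A) :
    (ofFun f δ).right = Multiplicative.ofAdd δ := rfl

lemma leftAt_zero (x : D ≀ᵣ Multiplicative A) : leftAt x 0 = x.left 1 := by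
  simp [leftAt]

lemma ext_leftAt {x y : D ≀ᵣ Multiplicative A} (hl : ∀ a, leftAt x a = leftAt y a)
    (hr : x.right = y.right) : x = y := by
  ext q
  · simpa [leftAt] using hl (-Multiplicative.toAdd q)
  · exact hr

variable [Group D]

@[simp] lemma leftAt_one (a : A) : leftAt (1 : D ≀ᵣ Multiplicative A) a = 1 := rfl

lemma leftAt_mul (x y : D ≀ᵣ Multiplicative A) (a : A) :
    leftAt (x * y) a = leftAt x a * leftAt y (a + Multiplicative.toAdd x.right) := by
  simp only [leftAt, mul_left, Pi.mul_apply]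
  congr 2
  rw [neg_add, add_comm]; rfl

lemma leftAt_inv (x : D ≀ᵣ Multiplicative A) (a : A) :
    leftAt x⁻¹ a = (leftAt x (a - Multiplicative.toAdd x.right))⁻¹ := by
  simp only [leftAt, inv_left, Pi.inv_apply]
  congr 2
  rw [neg_sub, sub_eq_add_neg]; rfl

lemma right_pow (x : D ≀ᵣ Multiplicative A) (r : ℕ) : (x ^ r).right = x.right ^ r :=
  map_pow rightHom x r

lemma leftAt_pow (x : D ≀ᵣ Multiplicative A) (r : ℕ) (a : A) :
    leftAt (x ^ r) a =
      ((List.range r).map fun i => leftAt x (a + i • Multiplicative.toAdd x.right)).prod := by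
  induction r with
  | zero => simp [leftAt]
  | succ r ih =>
    rw [pow_succ, leftAt_mul, ih, List.range_succ, List.map_append, List.prod_append]
    simp [right_pow]

lemma leftAt_commutatorElement (x y : D ≀ᵣ Multiplicative A) (a : A) :
    leftAt ⁅x, y⁆ a = leftAt x a * leftAt y (a + Multiplicative.toAdd x.right) *
      (leftAt x (a + Multiplicative.toAdd y.right))⁻¹ * (leftAt y a)⁻¹ := by
  simp only [commutatorElement_def, leftAt_mul, leftAt_inv, mul_right, inv_right, toAdd_mul,
    toAdd_inv]
  congr 4 <;> abel

lemma leftAt_conj (x y : D ≀ᵣ Multiplicative A) (hy : y.right = 1) (a : A) :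
    leftAt (x * y * x⁻¹) a =
      leftAt x a * leftAt y (a + Multiplicative.toAdd x.right) * (leftAt x a)⁻¹ := by
  simp only [leftAt_mul, leftAt_inv, mul_right, hy, mul_one]
  congr 3; abel

end RegularWreathProduct

namespace GG

variable {n k : ℕ} {m : ℕ → ℕ}

lemma ee_pow_self (j : Fin k) : ee n k m j ^ m j = 1 :=
  (QuotientGroup.eq_one_iff _).mpr (Subgroup.subset_normalClosure ⟨j, rfl⟩)

lemma ee_pow_eq_pow (j : Fin k) {w w' : ℕ} (h : (w : ZMod (m j)) = w') :
    ee n k m j ^ w = ee n k m j ^ w' := by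
  rw [pow_eq_pow_mod w (ee_pow_self j), pow_eq_pow_mod w' (ee_pow_self j),
    (ZMod.natCast_eq_natCast_iff' w w' (m j)).mp h]

lemma eChunk_succ (u : ℕ → ℕ) (s t : ℕ) : eChunk n k m u s (t + 1) =
    if s ≤ t then (if h : t < k then ee n k m ⟨t, h⟩ ^ u t else 1) * eChunk n k m u s t
      else 1 := rfl

lemma eChunk_of_le (u : ℕ → ℕ) {s t : ℕ} (h : t ≤ s) : eChunk n k m u s t = 1 := by
  cases t with
  | zero => rfl
  | succ t => rw [eChunk_succ, if_neg (by omega)]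

lemma eChunk_split (u : ℕ → ℕ) {s r t : ℕ} (hsr : s ≤ r) (hrt : r ≤ t) :
    eChunk n k m u s t = eChunk n k m u r t * eChunk n k m u s r := by
  induction t with
  | zero => simp [Nat.le_zero.mp hrt, eChunk_of_le]
  | succ t ih =>
    rcases Nat.lt_or_ge t r with htr | hrt'
    · rw [show r = t + 1 by omega, eChunk_of_le u le_rfl, one_mul]
    · rw [eChunk_succ, eChunk_succ, if_pos (hsr.trans hrt'), if_pos hrt', ih hrt', mul_assoc]

lemma eChunk_single (u : ℕ → ℕ) (j : Fin k) :
    eChunk n k m u j (j + 1) = ee n k m j ^ u j := by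
  rw [eChunk_succ, if_pos le_rfl, dif_pos j.isLt, eChunk_of_le u le_rfl, mul_one]

lemma eChunk_congr {u u' : ℕ → ℕ} {s t : ℕ}
    (h : ∀ i : Fin k, s ≤ i → i < t → (u i : ZMod (m i)) = u' i) :
    eChunk n k m u s t = eChunk n k m u' s t := by
  induction t with
  | zero => rfl
  | succ t ih =>
    rw [eChunk_succ, eChunk_succ, ih fun i hs ht => h i hs (by omega)]
    split_ifs with hst htk
    · rw [ee_pow_eq_pow _ (h ⟨t, htk⟩ hst (by simp))]
    all_goals rfl

abbrev ExpVec (k : ℕ) (m : ℕ → ℕ) : Type := ∀ i : Fin k, ZMod (m i)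

def expHom : GG n k m →* Multiplicative (ExpVec k m) :=
  PresentedGroup.toGroup (f := Sum.elim (fun j => Multiplicative.ofAdd (Pi.single j 1)) 1) <| by
    rintro _ ⟨j, rfl⟩
    simp [← ofAdd_nsmul, ← Pi.single_smul]

@[simp] lemma expHom_ee (j : Fin k) :
    expHom (ee n k m j) = Multiplicative.ofAdd (Pi.single j 1) :=
  PresentedGroup.toGroup.of _

@[simp] lemma expHom_hh (l : Fin (2 * n)) : expHom (hh n k m l) = 1 :=
  PresentedGroup.toGroup.of _

lemma expHom_ee_pow (j : Fin k) (w : ℕ) :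
    expHom (ee n k m j ^ w) = Multiplicative.ofAdd (Pi.single j (w : ZMod (m j))) := by
  rw [map_pow, expHom_ee, ← ofAdd_nsmul, ← Pi.single_smul, nsmul_one]

lemma expHom_eChunk_apply (u : ℕ → ℕ) (s t : ℕ) (i : Fin k) :
    Multiplicative.toAdd (expHom (eChunk n k m u s t)) i =
      if s ≤ i ∧ i < t then (u i : ZMod (m i)) else 0 := by
  induction t with
  | zero => simp [eChunk]
  | succ t ih =>
    rw [eChunk_succ]
    by_cases hst : s ≤ t
    · by_cases htk : t < k
      · rw [if_pos hst, dif_pos htk, map_mul, expHom_ee_pow, toAdd_mul, toAdd_ofAdd,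
          Pi.add_apply, ih]
        rcases eq_or_ne i ⟨t, htk⟩ with rfl | hne
        · simp [hst]
        · rw [Pi.single_eq_of_ne hne, zero_add]
          have : (i : ℕ) ≠ t := fun h => hne (Fin.ext h)
          congr 1; apply propext; omega
      · rw [if_pos hst, dif_neg htk, one_mul, ih]
        congr 1; apply propext; omega
    · rw [if_neg hst, if_neg (by omega)]; rfl

abbrev genSet (n k : ℕ) (m : ℕ → ℕ) : Set (GG n k m) := S1set n k m ∪ S2set n k m

lemma closure_genSet_le_ker : Subgroup.closure (genSet n k m) ≤ expHom.ker := by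
  rw [Subgroup.closure_le]
  rintro _ (⟨t, u, -, -, -, -, -, -, rfl⟩ | ⟨l, u, -, rfl⟩) <;>
    simp [commutatorElement_def, mul_comm]

def chunk (a : ExpVec k m) (s t : ℕ) : GG n k m :=
  eChunk n k m (fun i => if h : i < k then (a ⟨i, h⟩).val else 0) s t

lemma chunk_split (a : ExpVec k m) {s r t : ℕ} (hsr : s ≤ r) (hrt : r ≤ t) :
    chunk (n := n) a s t = chunk a r t * chunk a s r :=
  eChunk_split _ hsr hrt

lemma chunk_single (a : ExpVec k m) (j : Fin k) :
    chunk (n := n) a j (j + 1) = ee n k m j ^ (a j).val := by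
  rw [chunk, eChunk_single, dif_pos j.isLt]

lemma chunk_congr {a a' : ExpVec k m} {s t : ℕ}
    (h : ∀ i : Fin k, s ≤ i → i < t → a i = a' i) :
    chunk (n := n) a s t = chunk a' s t :=
  eChunk_congr fun i hs ht => by simp [h i hs ht]

lemma chunk_eq_one {a : ExpVec k m} {s t : ℕ} (h : ∀ i : Fin k, s ≤ i → i < t → a i = 0) :
    chunk (n := n) a s t = 1 := by
  rw [chunk, eChunk_congr (u' := 0) fun i hs ht => by simp [h i hs ht]]
  induction t with
  | zero => rfl
  | succ t ih => simp [eChunk_succ, ih fun i hs ht => h i hs (by omega)]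

lemma eChunk_eq_chunk (u : ℕ → ℕ) (s t : ℕ) :
    eChunk n k m u s t = chunk (fun i => (u i : ZMod (m i))) s t :=
  eChunk_congr fun i _ _ => by simp

def transversal (a : ExpVec k m) : GG n k m := chunk a 0 k

lemma transversal_zero : transversal (n := n) (0 : ExpVec k m) = 1 :=
  chunk_eq_one fun _ _ _ => rfl

/-- `s1Elt j a x` is `g_ξ f_λ g_ξ⁻¹` for `t = j + 1` and `u_t = x`, the other `uᵢ` being read off
from `a`; `S1Param j a x` says that `λ ∈ Λ_t`. -/
def s1Elt (j : Fin k) (a : ExpVec k m) (x : ZMod (m j)) : GG n k m :=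
  chunk a (j + 1) k * ⁅ee n k m j ^ x.val, chunk a 0 j⁆ * (chunk a (j + 1) k)⁻¹

abbrev S1Param (j : Fin k) (a : ExpVec k m) (x : ZMod (m j)) : Prop :=
  (∃ i < j, a i ≠ 0) ∧ x ≠ 0

lemma s1Elt_eq_one {j : Fin k} {a : ExpVec k m} {x : ZMod (m j)}
    (h : ¬S1Param j a x) : s1Elt (n := n) j a x = 1 := by
  rw [S1Param, not_and_or, not_exists] at h
  rcases h with ha | hx
  · rw [s1Elt, chunk_eq_one fun i _ hi => not_not.mp fun h' => ha i ⟨hi, h'⟩]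
    simp
  · simp [s1Elt, not_not.mp hx]

lemma s1Elt_congr (j : Fin k) {a a' : ExpVec k m} (h : ∀ i ≠ j, a i = a' i) (x : ZMod (m j)) :
    s1Elt (n := n) j a x = s1Elt j a' x := by
  rw [s1Elt, s1Elt, chunk_congr fun i hs _ => h i (by rintro rfl; omega),
    chunk_congr (s := 0) (t := j) fun i _ ht => h i (by rintro rfl; omega)]

def s2Elt (l : Fin (2 * n)) (a : ExpVec k m) : GG n k m :=
  transversal a * hh n k m l * (transversal a)⁻¹

lemma exists_s2Elt_eq {g : GG n k m} (hg : g ∈ S2set n k m) : ∃ l a, s2Elt l a = g := by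
  obtain ⟨l, u, -, rfl⟩ := hg
  exact ⟨l, fun i => (u i : ZMod (m i)), by rw [s2Elt, transversal, eChunk_eq_chunk]⟩

variable [∀ i : Fin k, NeZero (m i)]

lemma expHom_chunk_apply (a : ExpVec k m) (s t : ℕ) (i : Fin k) :
    Multiplicative.toAdd (expHom (chunk (n := n) a s t)) i =
      if s ≤ i ∧ i < t then a i else 0 := by
  simp [chunk, expHom_eChunk_apply]

lemma expHom_transversal (a : ExpVec k m) :
    expHom (transversal (n := n) a) = Multiplicative.ofAdd a := by
  ext i
  simp [transversal, expHom_chunk_apply]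

def posExp (a : ExpVec k m) (i : ℕ) : ℕ := if h : i < k then (a ⟨i, h⟩ - 1).val + 1 else 0

lemma natCast_posExp (a : ExpVec k m) (i : Fin k) : (posExp a i : ZMod (m i)) = a i := by
  simp [posExp]

lemma posExp_mem_Icc (a : ExpVec k m) (i : Fin k) : posExp a i ∈ Set.Icc 1 (m i) := by
  simpa [posExp] using (ZMod.val_lt (a i - 1))

lemma eq_zero_of_posExp_eq (a : ExpVec k m) (i : Fin k) (h : posExp a i = m i) : a i = 0 := by
  rw [← natCast_posExp a i, h, ZMod.natCast_self]

lemma s1Elt_mem {j : Fin k} {a : ExpVec k m} {x : ZMod (m j)} (h : S1Param j a x) :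
    s1Elt j a x ∈ S1set n k m := by
  obtain ⟨⟨i₀, hi₀, ha₀⟩, hx⟩ := h
  set u := Function.update (posExp a) j x.val
  have hu : ∀ i : Fin k, i ≠ j → u i = posExp a i := fun i hi =>
    Function.update_of_ne (Fin.val_ne_of_ne hi) _ _
  have hchunk : ∀ s t : ℕ, t ≤ j ∨ j < s → eChunk n k m u s t = chunk a s t :=
    fun s t hst => by
    rw [eChunk_eq_chunk]
    refine chunk_congr fun i hs ht => ?_
    rw [hu i (by rintro rfl; omega), natCast_posExp]
  refine ⟨j + 1, u, by omega, j.isLt, fun i hi => ?_, ⟨i₀, by simpa using hi₀, ?_⟩, ?_,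
    fun i hi hik => ?_, ?_⟩
  · have hik : i < k := by omega
    rw [show u i = posExp a i from hu ⟨i, hik⟩ (by simp [Fin.ext_iff]; omega)]
    exact posExp_mem_Icc a ⟨i, hik⟩
  · rw [show u i₀ = posExp a i₀ from hu i₀ hi₀.ne]
    exact fun h => ha₀ (eq_zero_of_posExp_eq a i₀ h)
  · have := ZMod.val_lt x
    have := (ZMod.val_ne_zero x).mpr hx
    simp [u]
    omega
  · rw [show u i = posExp a i from hu ⟨i, hik⟩ (by simp [Fin.ext_iff]; omega)]
    exact posExp_mem_Icc a ⟨i, hik⟩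
  · simp only [Nat.add_sub_cancel]
    rw [hchunk _ _ (.inr (by omega)), hchunk _ _ (.inl le_rfl), eChunk_single, s1Elt]
    simp [u]

lemma s1Elt_mem_closure (j : Fin k) (a : ExpVec k m) (x : ZMod (m j)) :
    s1Elt j a x ∈ Subgroup.closure (genSet n k m) := by
  by_cases h : S1Param j a x
  · exact Subgroup.subset_closure (.inl (s1Elt_mem h))
  · rw [s1Elt_eq_one h]
    exact Subgroup.one_mem _

lemma s2Elt_mem (l : Fin (2 * n)) (a : ExpVec k m) : s2Elt l a ∈ S2set n k m := by
  refine ⟨l, posExp a, fun i hi => posExp_mem_Icc a ⟨i, hi⟩, ?_⟩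
  rw [s2Elt, transversal, eChunk_eq_chunk, chunk_congr fun i _ _ => natCast_posExp a i]

lemma transversal_mul_ee_mul_inv (a : ExpVec k m) (j : Fin k) :
    transversal a * ee n k m j * (transversal (a + Pi.single j 1))⁻¹ =
      s1Elt j a (a j) * (s1Elt j a (a j + 1))⁻¹ := by
  have hsplit : ∀ b : ExpVec k m, transversal (n := n) b =
      chunk b (j + 1) k * (ee n k m j ^ (b j).val * chunk b 0 j) := fun b => by
    rw [transversal, chunk_split b (Nat.zero_le _) (j.isLt : (j : ℕ) + 1 ≤ k),
      chunk_split b (Nat.zero_le _) (Nat.le_succ j), chunk_single]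
  have hoff : ∀ i ≠ j, (a + Pi.single j 1 : ExpVec k m) i = a i := fun i hi => by simp [hi]
  have hpow : ee n k m j ^ (a j + 1).val = ee n k m j ^ (a j).val * ee n k m j := by
    rw [← pow_succ]
    exact ee_pow_eq_pow j (by simp)
  rw [hsplit, hsplit, s1Elt, s1Elt, chunk_congr fun i hs _ => hoff i (by rintro rfl; omega),
    chunk_congr (s := 0) (t := j) fun i _ ht => hoff i (by rintro rfl; omega)]
  simp only [Pi.add_apply, Pi.single_eq_same, hpow]
  group

def label (j : Fin k) (a : ExpVec k m) (x : ZMod (m j)) : FreeGroup (genSet n k m) :=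
  if h : S1Param j a x then FreeGroup.of ⟨s1Elt j a x, .inl (s1Elt_mem h)⟩ else 1

@[simp] lemma label_zero (j : Fin k) (a : ExpVec k m) : label (n := n) j a 0 = 1 := by
  simp [label, S1Param]

lemma label_of_forall {j : Fin k} {a : ExpVec k m} (ha : ∀ i < j, a i = 0) (x : ZMod (m j)) :
    label (n := n) j a x = 1 := by
  rw [label, dif_neg]
  rintro ⟨⟨i, hi, hne⟩, -⟩
  exact hne (ha i hi)

lemma label_congr (j : Fin k) {a a' : ExpVec k m} (h : ∀ i ≠ j, a i = a' i) (x : ZMod (m j)) :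
    label (n := n) j a x = label j a' x := by
  have hparam : S1Param j a x ↔ S1Param j a' x :=
    and_congr_left' <| exists_congr fun i => and_congr_right fun hi => by rw [h i hi.ne]
  unfold label
  split_ifs with h₁ h₂ h₂
  · simp only [s1Elt_congr j h x]
  · exact absurd (hparam.mp h₁) h₂
  · exact absurd (hparam.mpr h₂) h₁
  · rfl

def eLabel (j : Fin k) (a : ExpVec k m) : FreeGroup (genSet n k m) :=
  label j a (a j) * (label j a (a j + 1))⁻¹

def hLabel (l : Fin (2 * n)) (a : ExpVec k m) : FreeGroup (genSet n k m) :=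
  FreeGroup.of ⟨s2Elt l a, .inr (s2Elt_mem l a)⟩

lemma prod_eLabel (j : Fin k) (a : ExpVec k m) (r : ℕ) :
    ((List.range r).map fun i => eLabel (n := n) j (a + i • Pi.single j 1)).prod =
      label j a (a j) * (label j a (a j + r))⁻¹ := by
  have hterm : ∀ i : ℕ, eLabel (n := n) j (a + i • Pi.single j 1) =
      label j a (a j + i) / label j a (a j + (i + 1 : ℕ)) := fun i => by
    have hoff : ∀ i' ≠ j, (a + i • Pi.single j 1 : ExpVec k m) i' = a i' := fun i' hi' => by
      simp [hi']
    rw [eLabel, label_congr j hoff, label_congr j hoff, div_eq_mul_inv]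
    simp [add_assoc]
  rw [List.map_congr_left fun i _ => hterm i, List.prod_range_div', div_eq_mul_inv]
  simp

open RegularWreathProduct

/-- The coordinate of `psi g` at `a` spells `σ(a) g σ(a + φ g)⁻¹` as a word in `S₁ ∪ S₂`. -/
def psi : GG n k m →* FreeGroup (genSet n k m) ≀ᵣ Multiplicative (ExpVec k m) :=
  PresentedGroup.toGroup
    (f := Sum.elim (fun j => ofFun (eLabel j) (Pi.single j 1)) fun l => ofFun (hLabel l) 0) <| by
    rintro _ ⟨j, rfl⟩
    refine ext_leftAt (fun a => ?_) ?_
    · rw [map_pow, FreeGroup.lift_apply_of, Sum.elim_inl, leftAt_pow]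
      simp only [right_ofFun, toAdd_ofAdd, leftAt_ofFun, prod_eLabel, ZMod.natCast_self, add_zero,
        mul_inv_cancel, leftAt_one]
    · simp [right_pow, ← ofAdd_nsmul, ← Pi.single_smul]

lemma psi_ee (j : Fin k) : psi (ee n k m j) = ofFun (eLabel j) (Pi.single j 1) :=
  PresentedGroup.toGroup.of _

lemma psi_hh (l : Fin (2 * n)) : psi (hh n k m l) = ofFun (hLabel l) 0 :=
  PresentedGroup.toGroup.of _

lemma psi_right (g : GG n k m) : (psi g).right = expHom g := by
  suffices h : rightHom.comp psi = expHom from DFunLike.congr_fun h g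
  refine PresentedGroup.ext fun x => ?_
  rcases x with j | l
  · exact (congrArg right (psi_ee j)).trans (expHom_ee j).symm
  · exact (congrArg right (psi_hh l)).trans (expHom_hh l).symm

lemma leftAt_psi_ee_pow (j : Fin k) (w : ℕ) (a : ExpVec k m) :
    leftAt (psi (ee n k m j ^ w)) a = label j a (a j) * (label j a (a j + w))⁻¹ := by
  rw [map_pow, psi_ee, leftAt_pow]
  simp only [right_ofFun, toAdd_ofAdd, leftAt_ofFun, prod_eLabel]

lemma leftAt_psi_eChunk (u : ℕ → ℕ) (s t : ℕ) {a : ExpVec k m}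
    (ha : ∀ i : Fin k, i + 1 < t → a i = 0) : leftAt (psi (eChunk n k m u s t)) a = 1 := by
  induction t generalizing a with
  | zero => simp [eChunk]
  | succ t ih =>
    rw [eChunk_succ]
    split_ifs with hst htk
    · have hlow : ∀ i < (⟨t, htk⟩ : Fin k), a i = 0 := fun i hi => ha i (by
        simp [Fin.lt_def] at hi; omega)
      rw [map_mul, leftAt_mul, leftAt_psi_ee_pow, label_of_forall hlow, label_of_forall hlow,
        psi_right, expHom_ee_pow]
      simp only [inv_one, mul_one, one_mul, toAdd_ofAdd]
      refine ih fun i hi => ?_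
      have : i ≠ ⟨t, htk⟩ := by simp [Fin.ext_iff]; omega
      simp [this, ha i (by omega)]
    · simpa using ih fun i hi => ha i (by omega)
    · simp

lemma leftAt_psi_s1Elt (j : Fin k) (a : ExpVec k m) (x : ZMod (m j)) :
    leftAt (psi (s1Elt (n := n) j a x)) 0 = label j a x := by
  have hcomm : (psi ⁅ee n k m j ^ x.val, chunk (n := n) a 0 j⁆).right = 1 := by
    rw [psi_right, map_commutatorElement, commutatorElement_eq_one_iff_mul_comm]
    exact mul_comm _ _
  rw [s1Elt, map_mul, map_mul, map_inv, leftAt_conj _ _ hcomm, map_commutatorElement,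
    leftAt_commutatorElement]
  simp only [psi_right, zero_add, expHom_ee_pow, toAdd_ofAdd, ZMod.natCast_zmod_val]
  set D := chunk (n := n) a (j + 1) k
  set C := chunk (n := n) a 0 j
  set p := Multiplicative.toAdd (expHom D)
  set c := Multiplicative.toAdd (expHom C)
  have hp : ∀ i ≤ j, p i = 0 := fun i hi => by
    rw [Fin.le_def] at hi
    simp only [p, D, expHom_chunk_apply]
    split_ifs <;> first | omega | rfl
  have hpc : ∀ i ≠ j, (p + c) i = a i := fun i hi => by
    have := Fin.val_ne_of_ne hi
    have := i.isLt
    simp only [p, c, D, C, Pi.add_apply, expHom_chunk_apply]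
    split_ifs <;> first | omega | simp
  have hD : leftAt (psi D) 0 = 1 := leftAt_psi_eChunk _ _ _ fun _ _ => rfl
  have hC : ∀ b : ExpVec k m, (∀ i < j, b i = 0) → leftAt (psi C) b = 1 := fun b hb =>
    leftAt_psi_eChunk _ _ _ fun i hi => hb i (by rw [Fin.lt_def]; omega)
  have hE : ∀ b : ExpVec k m, b j = 0 →
      leftAt (psi (ee n k m j ^ x.val)) b = (label j b x)⁻¹ :=
    fun b hb => by rw [leftAt_psi_ee_pow, hb, label_zero, one_mul, zero_add, ZMod.natCast_zmod_val]
  rw [hD, hE p (hp j le_rfl), label_of_forall fun i hi => hp i hi.le,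
    hC p fun i hi => hp i hi.le, hC _ fun i hi => by simp [hp i hi.le, hi.ne],
    hE (p + c) (by simp [hp j le_rfl, c, C, expHom_chunk_apply]), label_congr j hpc]
  simp

lemma leftAt_psi_s2Elt (l : Fin (2 * n)) (a : ExpVec k m) :
    leftAt (psi (s2Elt l a)) 0 = hLabel l a := by
  have hσ : leftAt (psi (transversal (n := n) a)) 0 = 1 := leftAt_psi_eChunk _ _ _ fun _ _ => rfl
  rw [s2Elt, map_mul, map_mul, map_inv, leftAt_conj _ _ (by simp [psi_hh]), hσ, psi_hh,
    psi_right, expHom_transversal]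
  simp

lemma exists_s1Elt_eq {g : GG n k m} (hg : g ∈ S1set n k m) :
    ∃ j a x, S1Param j a x ∧ s1Elt j a x = g := by
  obtain ⟨t, u, ht, htk, hlow, ⟨i₀, hi₀, hne⟩, hw, -, rfl⟩ := hg
  obtain ⟨j, rfl⟩ : ∃ j, t = j + 1 := ⟨t - 1, by omega⟩
  simp only [Nat.add_sub_cancel] at hlow hi₀ hw ⊢
  have hcast : ∀ {i w : ℕ}, 0 < w → w < m i → (w : ZMod (m i)) ≠ 0 := fun hw hlt h => by
    have := Nat.le_of_dvd hw ((ZMod.natCast_eq_zero_iff _ _).mp h)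
    omega
  have hmj : 0 < m j := NeZero.pos (m (⟨j, by omega⟩ : Fin k))
  have hu₀ := hlow i₀ hi₀
  refine ⟨⟨j, by omega⟩, fun i => (u i : ZMod (m i)), (u j : ZMod (m j)),
    ⟨⟨⟨i₀, by omega⟩, hi₀, hcast (i := i₀) (w := u i₀) hu₀.1 (by omega)⟩,
      hcast (i := j) hw.1 (by omega)⟩, ?_⟩
  have hE : eChunk n k m u j (j + 1) = ee n k m ⟨j, by omega⟩ ^ (u j : ZMod (m j)).val :=
    (eChunk_single u ⟨j, by omega⟩).trans (ee_pow_eq_pow _ (by simp))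
  rw [hE, eChunk_eq_chunk, eChunk_eq_chunk]
  rfl

def theta : Subgroup.closure (genSet n k m) →* FreeGroup (genSet n k m) :=
  kerLeftHom.comp <| (psi.comp (Subgroup.closure (genSet n k m)).subtype).codRestrict _ fun g => by
    simpa [psi_right] using closure_genSet_le_ker g.2

lemma theta_of_mem (s : genSet n k m) :
    theta ⟨s, Subgroup.subset_closure s.2⟩ = FreeGroup.of s := by
  change (psi s.1).left 1 = _
  rw [← leftAt_zero]
  obtain ⟨s, hs | hs⟩ := s
  · obtain ⟨j, a, x, hcond, rfl⟩ := exists_s1Elt_eq hs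
    rw [leftAt_psi_s1Elt, label, dif_pos hcond]
  · obtain ⟨l, a, rfl⟩ := exists_s2Elt_eq hs
    rw [leftAt_psi_s2Elt, hLabel]

lemma closure_genSet_eq_ker : Subgroup.closure (genSet n k m) = expHom.ker := by
  refine le_antisymm closure_genSet_le_ker ?_
  refine MonoidHom.ker_le_of_transversal _ (σ := fun q => transversal (Multiplicative.toAdd q))
    transversal_zero (PresentedGroup.closure_range_of _) ?_
  rintro q _ ⟨j | l, rfl⟩
  · change transversal _ * ee n k m j *
      (transversal (Multiplicative.toAdd (q * expHom (ee n k m j))))⁻¹ ∈ _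
    rw [expHom_ee, toAdd_mul, toAdd_ofAdd, transversal_mul_ee_mul_inv]
    exact mul_mem (s1Elt_mem_closure _ _ _) (inv_mem (s1Elt_mem_closure _ _ _))
  · change transversal _ * hh n k m l *
      (transversal (Multiplicative.toAdd (q * expHom (hh n k m l))))⁻¹ ∈ _
    rw [expHom_hh, mul_one]
    exact Subgroup.subset_closure (.inr (s2Elt_mem l _))

lemma index_closure_genSet :
    (Subgroup.closure (genSet n k m)).index = ∏ i ∈ Finset.range k, m i := by
  have hsurj : Function.Surjective (expHom (n := n) (k := k) (m := m)) := fun q =>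
    ⟨transversal (Multiplicative.toAdd q), expHom_transversal _⟩
  rw [closure_genSet_eq_ker, Subgroup.index_ker, MonoidHom.range_eq_top.mpr hsurj,
    Subgroup.card_top, Nat.card_congr Multiplicative.toAdd, Nat.card_pi]
  simp [Fin.prod_univ_eq_prod_range]

end GG

theorem F_free_of_index_prod_general
    (n k : ℕ) (m : ℕ → ℕ) (hm : ∀ i < k, 2 ≤ m i) :
    (∀ (H : Type) [Group H] (f : ↥(S1set n k m ∪ S2set n k m) → H),
      ∃! φ : ↥(Subgroup.closure (S1set n k m ∪ S2set n k m)) →* H,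
        ∀ s : ↥(S1set n k m ∪ S2set n k m),
          φ ⟨s.1, Subgroup.subset_closure s.2⟩ = f s) ∧
    (Subgroup.closure (S1set n k m ∪ S2set n k m)).index = ∏ i ∈ Finset.range k, m i := by
  have : ∀ i : Fin k, NeZero (m i) := fun i => ⟨by have := hm i i.isLt; omega⟩
  exact ⟨Subgroup.existsUnique_lift_of_retraction GG.theta GG.theta_of_mem,
    GG.index_closure_genSet⟩

/-- **Corollary 3.14.** The subgroup `F = ⟨S₁ ∪ S₂⟩` of `G` is freely generated by the set
`S₁ ∪ S₂` (it has the universal property of the free group on `S₁ ∪ S₂`), and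
`[G : F] = m₁⋯m_k`. -/
theorem F_free_of_index_prod
    (n k : ℕ) (m : ℕ → ℕ) (hk : 1 ≤ k) (hm : ∀ i < k, 2 ≤ m i)
    (hexc1 : ¬(n = 0 ∧ k = 1)) (hexc2 : ¬(n = 0 ∧ k = 2 ∧ m 0 = 2 ∧ m 1 = 2)) :
    (∀ (H : Type) [Group H] (f : ↥(S1set n k m ∪ S2set n k m) → H),
      ∃! φ : ↥(Subgroup.closure (S1set n k m ∪ S2set n k m)) →* H,
        ∀ s : ↥(S1set n k m ∪ S2set n k m),
          φ ⟨s.1, Subgroup.subset_closure s.2⟩ = f s) ∧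
    (Subgroup.closure (S1set n k m ∪ S2set n k m)).index = ∏ i ∈ Finset.range k, m i :=
  F_free_of_index_prod_general n k m hm
end

section
/- Let n ≥ 0, k ≥ 1 and m₁,…,m_k ≥ 2 be integers such that (n,k,m₁,…,m_k) is neither of the form (0,1,m₁) nor equal to (0,2,2,2). Let Ĝ = ⟨e₁,…,e_k, h₁,…,h_{2n}, z ∣ e₁^{m₁} = ⋯ = e_k^{m_k} = z, [h₁,z] = ⋯ = [h_{2n},z] = 1⟩ and G = ⟨e₁,…,e_k, h₁,…,h_{2n} ∣ e₁^{m₁} = ⋯ = e_k^{m_k} = 1⟩. Then in Ĝ the element z has infinite order, the cyclic subgroup ⟨z⟩ equals the center of Ĝ, and the quotient group Ĝ/⟨z⟩ is isomorphic to G. -/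
/-!
Killing `z` gives a surjection `Ĝ → G`, and sending `eᵢ, hⱼ` to their classes in `Ĝ/⟨z⟩` is
well defined (`eᵢ^{mᵢ} = z`), so the kernel of `Ĝ → G` is exactly `⟨z⟩`; `z` is central because
`eᵢ` commutes with its power `z`. The group `G` is the free product of the cyclic groups generated
by the `eᵢ` and `hⱼ`, and a free product of at least two nontrivial groups has trivial centre (a
central reduced word would keep its first letter under conjugation). As a surjection maps centre
into centre, the centre of `Ĝ` lies in the kernel `⟨z⟩`. Finally `eᵢ ↦ 1/mᵢ`, `hⱼ ↦ 0`, `z ↦ 1`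
defines a homomorphism `Ĝ → ℚ`, so `z` has infinite order.
-/

open scoped commutatorElement

/-- The relators `eᵢ^{mᵢ} z⁻¹` and `[h_j, z]` defining the central extension `Ĝ`. -/
def GhatRels (n k : ℕ) (m : ℕ → ℕ) : Set (FreeGroup ((Fin k ⊕ Fin (2 * n)) ⊕ Unit)) :=
  Set.range (fun i : Fin k =>
      FreeGroup.of (Sum.inl (Sum.inl i)) ^ m i.val * (FreeGroup.of (Sum.inr ()))⁻¹) ∪
  Set.range (fun j : Fin (2 * n) =>
      ⁅(FreeGroup.of (Sum.inl (Sum.inr j)) : FreeGroup ((Fin k ⊕ Fin (2 * n)) ⊕ Unit)),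
        FreeGroup.of (Sum.inr ())⁆)

/-- The group `Ĝ = ⟨e₁,…,e_k, h₁,…,h_{2n}, z ∣ e₁^{m₁} = ⋯ = e_k^{m_k} = z,
[h₁,z] = ⋯ = [h_{2n},z] = 1⟩`. -/
abbrev GHat (n k : ℕ) (m : ℕ → ℕ) : Type := PresentedGroup (GhatRels n k m)

/-- The generator `e_{i+1}` of `Ĝ` (0-indexed). -/
def eeHat (n k : ℕ) (m : ℕ → ℕ) (i : Fin k) : GHat n k m :=
  PresentedGroup.of (Sum.inl (Sum.inl i))

/-- The generator `h_{j+1}` of `Ĝ` (0-indexed). -/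
def hhHat (n k : ℕ) (m : ℕ → ℕ) (j : Fin (2 * n)) : GHat n k m :=
  PresentedGroup.of (Sum.inl (Sum.inr j))

/-- The central generator `z` of `Ĝ`. -/
def zHat (n k : ℕ) (m : ℕ → ℕ) : GHat n k m := PresentedGroup.of (Sum.inr ())

open Monoid

namespace Monoid.CoprodI.NeWord

variable {ι : Type*} {M : ι → Type*} [∀ i, Monoid (M i)]

theorem head_ne_one {i j : ι} (w : NeWord M i j) : w.head ≠ 1 := by
  induction w with
  | singleton x hx => exact hx
  | append w₁ _ _ ih => exact ih

theorem fstIdx_eq_of_prod_eq {i₁ j₁ i₂ j₂ : ι} {w₁ : NeWord M i₁ j₁} {w₂ : NeWord M i₂ j₂}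
    (h : w₁.prod = w₂.prod) : i₁ = i₂ := by
  classical
  have hword : w₁.toWord = w₂.toWord := Word.equiv.symm.injective h
  have hhead := congrArg List.head? (congrArg Word.toList hword)
  simp only [toWord, toList_head?, Option.some.injEq] at hhead
  exact congrArg Sigma.fst hhead

theorem prod_eq_of_head_or_exists_tail {i j : ι} (w : NeWord M i j) :
    (i = j ∧ w.prod = of w.head) ∨
      ∃ (k : ι) (w' : NeWord M k j), k ≠ i ∧ w.prod = of w.head * w'.prod := by
  induction w with
  | singleton x hx => exact Or.inl ⟨rfl, prod_singleton x hx⟩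
  | append w₁ hne w₂ ih₁ _ =>
    rcases ih₁ with ⟨rfl, h₁⟩ | ⟨k, w', hk, h₁⟩
    · exact Or.inr ⟨_, w₂, hne.symm, by rw [append_prod, append_head, h₁]⟩
    · refine Or.inr ⟨k, append w' hne w₂, hk, ?_⟩
      rw [append_prod, append_prod, append_head, h₁, mul_assoc]

end Monoid.CoprodI.NeWord

namespace Monoid.CoprodI

theorem exists_neWord_prod_eq {ι : Type*} {M : ι → Type*} [∀ i, Monoid (M i)]
    {g : CoprodI M} (hg : g ≠ 1) : ∃ (i j : ι) (w : NeWord M i j), w.prod = g := by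
  classical
  have hw : Word.equiv g ≠ Word.empty := fun h => hg <| by
    rw [← Word.equiv.symm_apply_apply g, h]
    exact Word.prod_empty
  obtain ⟨i, j, w, hw⟩ := NeWord.of_word _ hw
  exact ⟨i, j, w, by rw [NeWord.prod, hw]; exact Word.equiv.symm_apply_apply g⟩

theorem center_eq_bot {ι : Type*} {G : ι → Type*} [∀ i, Group (G i)] {a b : ι} (hab : a ≠ b)
    [Nontrivial (G a)] [Nontrivial (G b)] : Subgroup.center (CoprodI G) = ⊥ := by
  refine eq_bot_iff.2 fun g hg => ?_
  by_contra hg1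
  obtain ⟨i, j, w, rfl⟩ := exists_neWord_prod_eq hg1
  by_cases hij : i = j
  · subst hij
    -- conjugating by a letter from another factor changes the first factor of the reduced word
    obtain ⟨l, hli, x, hx⟩ : ∃ l, l ≠ i ∧ ∃ x : G l, x ≠ 1 := by
      by_cases hai : a = i
      · exact ⟨b, hai ▸ hab.symm, exists_ne 1⟩
      · exact ⟨a, hai, exists_ne 1⟩
    let w' := ((NeWord.singleton x hx).append hli w).append hli.symm
      (NeWord.singleton x⁻¹ (inv_ne_one.2 hx))
    refine hli (NeWord.fstIdx_eq_of_prod_eq (w₁ := w') (w₂ := w) ?_)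
    simp only [w', NeWord.append_prod, NeWord.prod_singleton, map_inv,
      Subgroup.mem_center_iff.1 hg, mul_inv_cancel_right]
  · -- dividing by the first letter on the left cancels it, on the right it does not
    obtain ⟨_, hw⟩ | ⟨k, w', hki, hw⟩ := w.prod_eq_of_head_or_exists_tail
    · exact hij ‹_›
    let w'' := w.append (Ne.symm hij) (NeWord.singleton w.head⁻¹ (inv_ne_one.2 w.head_ne_one))
    refine hki (NeWord.fstIdx_eq_of_prod_eq (w₁ := w') (w₂ := w'') ?_)
    simp only [w'', NeWord.append_prod, NeWord.prod_singleton, map_inv]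
    rw [← Subgroup.mem_center_iff.1 hg (of w.head)⁻¹, hw, inv_mul_cancel_left]

end Monoid.CoprodI

section Center

variable {G H : Type*} [Group G] [Group H]

theorem Subgroup.normal_of_le_center {N : Subgroup G} (h : N ≤ Subgroup.center G) : N.Normal :=
  ⟨fun x hx g => by rwa [Subgroup.mem_center_iff.1 (h hx) g, mul_inv_cancel_right]⟩

theorem MonoidHom.map_mem_center_of_surjective {f : G →* H} (hf : Function.Surjective f) {g : G}
    (hg : g ∈ Subgroup.center G) : f g ∈ Subgroup.center H := by
  refine Subgroup.mem_center_iff.2 fun h => ?_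
  obtain ⟨x, rfl⟩ := hf h
  rw [← map_mul, Subgroup.mem_center_iff.1 hg, map_mul]

theorem MonoidHom.center_le_ker_of_surjective {f : G →* H} (hf : Function.Surjective f)
    (hH : Subgroup.center H = ⊥) : Subgroup.center G ≤ f.ker := fun _ hg =>
  (hH ▸ f.map_mem_center_of_surjective hf hg :)

end Center

abbrev CyclicPresentedGroup (n : ℕ) : Type :=
  PresentedGroup ({FreeGroup.of () ^ n} : Set (FreeGroup Unit))

namespace CyclicPresentedGroup

theorem of_pow (n : ℕ) : (PresentedGroup.of () : CyclicPresentedGroup n) ^ n = 1 := by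
  rw [PresentedGroup.of, ← map_pow]
  exact PresentedGroup.one_of_mem rfl

theorem nontrivial {n : ℕ} (hn : n ≠ 1) : Nontrivial (CyclicPresentedGroup n) := by
  have := ZMod.nontrivial_iff.2 hn
  let toZMod : CyclicPresentedGroup n →* Multiplicative (ZMod n) :=
    PresentedGroup.toGroup (f := fun _ => .ofAdd 1) <| by
      rintro _ rfl
      simp [← ofAdd_nsmul]
  refine nontrivial_of_ne (PresentedGroup.of ()) 1 fun h => one_ne_zero (α := ZMod n) ?_
  simpa [toZMod] using congrArg toZMod h

end CyclicPresentedGroup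

/-- The exponent `0` makes `CyclicPresentedGroup 0` infinite cyclic, the factor of a generator
`hⱼ`. -/
def factorOrder (n k : ℕ) (m : ℕ → ℕ) : Fin k ⊕ Fin (2 * n) → ℕ :=
  Sum.elim (fun i => m i) fun _ => 0

namespace GG

variable {n k : ℕ} {m : ℕ → ℕ}

theorem of_pow_factorOrder (a : Fin k ⊕ Fin (2 * n)) :
    (PresentedGroup.of a : GG n k m) ^ factorOrder n k m a = 1 := by
  rcases a with i | j
  · rw [PresentedGroup.of, ← map_pow]
    exact PresentedGroup.one_of_mem ⟨i, rfl⟩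
  · exact pow_zero _

def toCoprodI : GG n k m →* CoprodI fun a => CyclicPresentedGroup (factorOrder n k m a) :=
  PresentedGroup.toGroup (f := fun a =>
    CoprodI.of (M := fun a => CyclicPresentedGroup (factorOrder n k m a)) (i := a)
      (PresentedGroup.of ())) <| by
    rintro _ ⟨i, rfl⟩
    rw [map_pow, FreeGroup.lift_apply_of, ← map_pow]
    exact (congrArg (CoprodI.of (M := fun a => CyclicPresentedGroup (factorOrder n k m a)))
      (CyclicPresentedGroup.of_pow _)).trans (map_one _)

def ofCoprodI : (CoprodI fun a => CyclicPresentedGroup (factorOrder n k m a)) →* GG n k m :=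
  CoprodI.lift fun a => PresentedGroup.toGroup (f := fun _ => PresentedGroup.of a) <| by
    rintro _ rfl
    rw [map_pow, FreeGroup.lift_apply_of]
    exact of_pow_factorOrder a

def equivCoprodI : GG n k m ≃* CoprodI fun a => CyclicPresentedGroup (factorOrder n k m a) :=
  MonoidHom.toMulEquiv toCoprodI ofCoprodI
    (PresentedGroup.ext fun a => by simp [toCoprodI, ofCoprodI])
    (CoprodI.ext_hom _ _ fun a => PresentedGroup.ext fun _ => by simp [toCoprodI, ofCoprodI])

theorem center_eq_bot (hk : 1 ≤ k) (hm : ∀ i < k, 2 ≤ m i) (hexc1 : ¬(n = 0 ∧ k = 1)) :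
    Subgroup.center (GG n k m) = ⊥ := by
  obtain ⟨a, b, hab, ha, hb⟩ : ∃ a b : Fin k ⊕ Fin (2 * n), a ≠ b ∧
      factorOrder n k m a ≠ 1 ∧ factorOrder n k m b ≠ 1 := by
    rcases Nat.eq_zero_or_pos n with rfl | hn
    · have h0 := hm 0 (by omega)
      have h1 := hm 1 (by omega)
      exact ⟨.inl ⟨0, by omega⟩, .inl ⟨1, by omega⟩, by simp, show m 0 ≠ 1 by omega,
        show m 1 ≠ 1 by omega⟩
    · exact ⟨.inr ⟨0, by omega⟩, .inr ⟨1, by omega⟩, by simp, by simp [factorOrder],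
        by simp [factorOrder]⟩
  have := CyclicPresentedGroup.nontrivial ha
  have := CyclicPresentedGroup.nontrivial hb
  refine eq_bot_iff.2 fun g hg => equivCoprodI.map_eq_one_iff.1 ?_
  exact (CoprodI.center_eq_bot (G := fun a => CyclicPresentedGroup (factorOrder n k m a)) hab ▸
    equivCoprodI.toMonoidHom.map_mem_center_of_surjective equivCoprodI.surjective hg :)

end GG

namespace GHat

variable {n k : ℕ} {m : ℕ → ℕ}

theorem eeHat_pow (i : Fin k) : eeHat n k m i ^ m i = zHat n k m := by
  have := PresentedGroup.one_of_mem (Set.mem_union_left _ ⟨i, rfl⟩ : _ ∈ GhatRels n k m)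
  rw [map_mul, map_pow, map_inv] at this
  exact mul_inv_eq_one.1 this

theorem commute_hhHat_zHat (j : Fin (2 * n)) : Commute (hhHat n k m j) (zHat n k m) := by
  have := PresentedGroup.one_of_mem (Set.mem_union_right _ ⟨j, rfl⟩ : _ ∈ GhatRels n k m)
  rw [map_commutatorElement] at this
  exact commutatorElement_eq_one_iff_commute.1 this

theorem zHat_mem_center : zHat n k m ∈ Subgroup.center (GHat n k m) := by
  suffices Subgroup.centralizer {zHat n k m} = ⊤ from
    Subgroup.mem_center_iff.2 fun g => Subgroup.mem_centralizer_singleton_iff.1 (this ▸ trivial)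
  refine eq_top_iff.2 fun g _ => PresentedGroup.generated_by _ _ ?_ g
  rintro ((i | j) | ⟨⟩) <;> rw [Subgroup.mem_centralizer_singleton_iff]
  · exact (eeHat_pow i ▸ Commute.self_pow (eeHat n k m i) (m i)).eq
  · exact (commute_hhHat_zHat j).eq
  · rfl

instance : (Subgroup.zpowers (zHat n k m)).Normal :=
  Subgroup.normal_of_le_center (Subgroup.zpowers_le.2 zHat_mem_center)

def toGG : GHat n k m →* GG n k m :=
  PresentedGroup.toGroup (f := Sum.elim PresentedGroup.of 1) <| by
    rintro _ (⟨i, rfl⟩ | ⟨j, rfl⟩)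
    · simpa [factorOrder] using GG.of_pow_factorOrder (.inl i)
    · simp

theorem toGG_zHat : toGG (zHat n k m) = 1 :=
  PresentedGroup.toGroup.of _

theorem toGG_surjective : Function.Surjective (toGG : GHat n k m →* GG n k m) :=
  MonoidHom.range_eq_top.1 <| eq_top_iff.2 fun g _ => PresentedGroup.generated_by _ toGG.range
    (fun a => ⟨PresentedGroup.of (.inl a), PresentedGroup.toGroup.of _⟩) g

def ofGG : GG n k m →* GHat n k m ⧸ Subgroup.zpowers (zHat n k m) :=
  PresentedGroup.toGroup (f := fun a => ((PresentedGroup.of (.inl a) : GHat n k m) :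
    GHat n k m ⧸ Subgroup.zpowers (zHat n k m))) <| by
    rintro _ ⟨i, rfl⟩
    rw [map_pow, FreeGroup.lift_apply_of, ← QuotientGroup.mk_pow]
    exact (QuotientGroup.eq_one_iff _).2 (eeHat_pow i ▸ Subgroup.mem_zpowers _)

theorem ofGG_comp_toGG :
    ofGG.comp toGG = QuotientGroup.mk' (Subgroup.zpowers (zHat n k m)) := by
  refine PresentedGroup.ext ?_
  rintro (a | ⟨⟨⟩⟩)
  · simp [toGG, ofGG]
  · change ofGG (toGG (zHat n k m)) = (zHat n k m : GHat n k m ⧸ _)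
    rw [toGG_zHat, map_one, eq_comm, QuotientGroup.eq_one_iff]
    exact Subgroup.mem_zpowers _

theorem ker_toGG : (toGG : GHat n k m →* GG n k m).ker = Subgroup.zpowers (zHat n k m) := by
  refine le_antisymm (fun g hg => ?_) (Subgroup.zpowers_le.2 toGG_zHat)
  rw [← QuotientGroup.ker_mk' (Subgroup.zpowers (zHat n k m)), ← ofGG_comp_toGG,
    MonoidHom.mem_ker, MonoidHom.comp_apply, MonoidHom.mem_ker.1 hg, map_one]

theorem zpowers_zHat_eq_center (hG : Subgroup.center (GG n k m) = ⊥) :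
    Subgroup.zpowers (zHat n k m) = Subgroup.center (GHat n k m) :=
  le_antisymm (Subgroup.zpowers_le.2 zHat_mem_center)
    (ker_toGG ▸ toGG.center_le_ker_of_surjective toGG_surjective hG)

def toMultiplicativeRat (hm : ∀ i : Fin k, m i ≠ 0) : GHat n k m →* Multiplicative ℚ :=
  PresentedGroup.toGroup
    (f := Sum.elim (Sum.elim (fun i => .ofAdd (m i : ℚ)⁻¹) 1) fun _ => .ofAdd 1) <| by
    rintro _ (⟨i, rfl⟩ | ⟨j, rfl⟩)
    · simp [← ofAdd_nsmul, hm i]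
    · simp

theorem zHat_not_isOfFinOrder (hm : ∀ i : Fin k, m i ≠ 0) : ¬IsOfFinOrder (zHat n k m) := by
  intro h
  have hfin := (toMultiplicativeRat hm).isOfFinOrder h
  rw [zHat, toMultiplicativeRat, PresentedGroup.toGroup.of] at hfin
  exact one_ne_zero ((isOfFinAddOrder_iff_eq_zero (1 : ℚ)).1 hfin)

end GHat

theorem zHat_center_and_quotient_general
    (n k : ℕ) (m : ℕ → ℕ) (hk : 1 ≤ k) (hm : ∀ i < k, 2 ≤ m i)
    (hexc1 : ¬(n = 0 ∧ k = 1)) :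
    ¬IsOfFinOrder (zHat n k m) ∧
    Subgroup.zpowers (zHat n k m) = Subgroup.center (GHat n k m) ∧
    Nonempty ((GHat n k m ⧸ Subgroup.center (GHat n k m)) ≃* GG n k m) := by
  have hcenter := GHat.zpowers_zHat_eq_center (GG.center_eq_bot hk hm hexc1)
  refine ⟨GHat.zHat_not_isOfFinOrder fun i => ?_, hcenter, ⟨?_⟩⟩
  · have := hm i i.isLt
    omega
  · exact (QuotientGroup.quotientMulEquivOfEq (hcenter.symm.trans GHat.ker_toGG.symm)).trans
      (QuotientGroup.quotientKerEquivOfSurjective _ GHat.toGG_surjective)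

/-- In `Ĝ`, the element `z` has infinite order, the cyclic subgroup `⟨z⟩` is the center of
`Ĝ`, and the quotient `Ĝ/⟨z⟩` is isomorphic to `G`. -/
theorem zHat_center_and_quotient
    (n k : ℕ) (m : ℕ → ℕ) (hk : 1 ≤ k) (hm : ∀ i < k, 2 ≤ m i)
    (hexc1 : ¬(n = 0 ∧ k = 1)) (hexc2 : ¬(n = 0 ∧ k = 2 ∧ m 0 = 2 ∧ m 1 = 2)) :
    ¬IsOfFinOrder (zHat n k m) ∧
    Subgroup.zpowers (zHat n k m) = Subgroup.center (GHat n k m) ∧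
    Nonempty ((GHat n k m ⧸ Subgroup.center (GHat n k m)) ≃* GG n k m) :=
  zHat_center_and_quotient_general n k m hk hm hexc1
end
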